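/- For every natural number Δ ≥ 2 and every natural number T ≥ 16·Δ·ln(2Δ), one has Δ·(Δ+1)·(1 - 1/(4Δ))^T ≤ 1/2 (as real numbers). -/
import Mathlib


/-- Core of the single-iteration analysis of Two-Hop-Coloring: for `Δ ≥ 2` and
`T ≥ 16·Δ·ln(2Δ)`, one has `Δ·(Δ+1)·(1 - 1/(4Δ))^T ≤ 1/2`. -/
theorem two_hop_coloring_iteration_bound (Δ T : ℕ) (hΔ : 2 ≤ Δ)
    (hT : (T : ℝ) ≥ 16 * (Δ : ℝ) * Real.log (2 * (Δ : ℝ))) :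
    (Δ : ℝ) * ((Δ : ℝ) + 1) * (1 - 1 / (4 * (Δ : ℝ))) ^ T ≤ 1 / 2 := by
  have hΔR : (2 : ℝ) ≤ (Δ : ℝ) := by exact_mod_cast hΔ
  have hΔ0 : (0 : ℝ) < (Δ : ℝ) := by linarith
  have h4Δ : (0 : ℝ) < 4 * (Δ : ℝ) := by linarith
  have hbase0 : (0 : ℝ) ≤ 1 - 1 / (4 * (Δ : ℝ)) := by
    have : 1 / (4 * (Δ : ℝ)) ≤ 1 := by
      rw [div_le_one h4Δ]; linarith
    linarith
  -- step 1: (1 - 1/(4Δ))^T ≤ exp(-T/(4Δ))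
  have h1 : (1 - 1 / (4 * (Δ : ℝ))) ^ T ≤ Real.exp (-((T : ℝ) / (4 * (Δ : ℝ)))) := by
    have hb : 1 - 1 / (4 * (Δ : ℝ)) ≤ Real.exp (-(1 / (4 * (Δ : ℝ)))) := by
      have := Real.add_one_le_exp (-(1 / (4 * (Δ : ℝ))))
      linarith
    calc (1 - 1 / (4 * (Δ : ℝ))) ^ T
        ≤ (Real.exp (-(1 / (4 * (Δ : ℝ))))) ^ T := pow_le_pow_left₀ hbase0 hb T
      _ = Real.exp (-((T : ℝ) / (4 * (Δ : ℝ)))) := by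
          rw [← Real.exp_nat_mul]; ring_nf
  -- step 2: exp(-T/(4Δ)) ≤ exp(-4 log(2Δ)) = 1/(2Δ)^4
  have hlog : Real.exp (-((T : ℝ) / (4 * (Δ : ℝ)))) ≤ (2 * (Δ : ℝ))⁻¹ ^ 4 := by
    have h2Δ : (0 : ℝ) < 2 * (Δ : ℝ) := by linarith
    have harg : -((T : ℝ) / (4 * (Δ : ℝ))) ≤ -(4 * Real.log (2 * (Δ : ℝ))) := by
      rw [neg_le_neg_iff, le_div_iff₀ h4Δ]
      nlinarith
    calc Real.exp (-((T : ℝ) / (4 * (Δ : ℝ))))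
        ≤ Real.exp (-(4 * Real.log (2 * (Δ : ℝ)))) := Real.exp_le_exp.mpr harg
      _ = (2 * (Δ : ℝ))⁻¹ ^ 4 := by
          rw [Real.exp_neg, show (4 : ℝ) * Real.log (2 * (Δ : ℝ)) = ((4:ℕ) : ℝ) * Real.log (2 * (Δ : ℝ)) by norm_num,
            Real.exp_nat_mul, Real.exp_log h2Δ, ← inv_pow]
  have hmulpos : (0 : ℝ) ≤ (Δ : ℝ) * ((Δ : ℝ) + 1) := by positivity
  calc (Δ : ℝ) * ((Δ : ℝ) + 1) * (1 - 1 / (4 * (Δ : ℝ))) ^ T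
      ≤ (Δ : ℝ) * ((Δ : ℝ) + 1) * ((2 * (Δ : ℝ))⁻¹ ^ 4) :=
        mul_le_mul_of_nonneg_left (h1.trans hlog) hmulpos
    _ ≤ 1 / 2 := by
        rw [inv_pow, mul_inv_le_iff₀ (by positivity)]
        nlinarith [sq_nonneg ((Δ:ℝ)), sq_nonneg ((Δ:ℝ)*(Δ:ℝ) - 1), sq_nonneg ((Δ:ℝ) - 1)]
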